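/- arXiv:1712.06907 — 2 statements merged into one kernel-verified Lean document; each statement's English description precedes it below -/
import Mathlib

section
/- The Hermitian dual code Q_{q^2}(f,g,h)^{perp_h} of the quasi-cyclic code Q_{q^2}(f,g,h) over F_{q^2} equals the quasi-cyclic code of length 2n corresponding to the R-submodule of R^2 generated by ([-bar(h^{[q]})(x) (g^{[q]})^perp(x)], [(g^{[q]})^perp(x)]) and ([(f^{[q]})^perp(x)], 0). -/
open Polynomial Finset

noncomputable section

variable {F : Type*} [Field F] [DecidableEq F]

/-- The vector in `F^n` corresponding to the residue class of a polynomial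
in `F[x]/(x^n-1)`: the coefficients of its canonical representative of degree `< n`. -/
def vecOf (n : ℕ) : F[X] →ₗ[F] (Fin n → F) where
  toFun a := fun i => (a %ₘ (X ^ n - 1)).coeff i
  map_add' a b := by
    funext i
    simp [Polynomial.add_modByMonic]
  map_smul' c a := by
    funext i
    simp [Polynomial.smul_modByMonic]

/-- The quasi-cyclic code `Q_q(f,g,h)`: the `F`-subspace of `F^n × F^n ≃ F^{2n}`
corresponding to the `R`-submodule of `R²` generated by `([f],[h f])` and `(0,[g])`. -/
def QCcode (n : ℕ) (f g h : F[X]) : Submodule F ((Fin n → F) × (Fin n → F)) where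
  carrier := {v | ∃ a b : F[X], v = (vecOf n (a * f), vecOf n (a * h * f + b * g))}
  zero_mem' := ⟨0, 0, by simp; rfl⟩
  add_mem' := by
    rintro v w ⟨a1, b1, rfl⟩ ⟨a2, b2, rfl⟩
    refine ⟨a1 + a2, b1 + b2, ?_⟩
    have h1 : (a1 + a2) * f = a1 * f + a2 * f := by ring
    have h2 : (a1 + a2) * h * f + (b1 + b2) * g
        = (a1 * h * f + b1 * g) + (a2 * h * f + b2 * g) := by ring
    rw [h1, h2, map_add (vecOf n) (a1 * f) (a2 * f),
      map_add (vecOf n) (a1 * h * f + b1 * g) (a2 * h * f + b2 * g)]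
    rfl
  smul_mem' := by
    rintro c v ⟨a, b, rfl⟩
    refine ⟨c • a, c • b, ?_⟩
    have h1 : (c • a) * f = c • (a * f) := smul_mul_assoc c a f
    have h2 : (c • a) * h * f + (c • b) * g = c • (a * h * f + b * g) := by
      rw [smul_add, smul_mul_assoc, smul_mul_assoc, smul_mul_assoc]
    rw [h1, h2, map_smul, map_smul]
    rfl

/-- Hamming weight of a vector. -/
def hWt {n : ℕ} (x : Fin n → F) : ℕ := Nat.card {i : Fin n // x i ≠ 0}

/-- Hamming weight of a vector of `F^{2n}` presented as a pair. -/
def hWt2 {n : ℕ} (v : (Fin n → F) × (Fin n → F)) : ℕ := hWt v.1 + hWt v.2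

/-- Symplectic weight. -/
def sWt {n : ℕ} (v : (Fin n → F) × (Fin n → F)) : ℕ :=
  Nat.card {i : Fin n // (v.1 i, v.2 i) ≠ (0, 0)}

/-- Euclidean inner product on `F^n`. -/
def eInn {n : ℕ} (x y : Fin n → F) : F := ∑ i, x i * y i

/-- Euclidean inner product on `F^{2n}`. -/
def eInn2 {n : ℕ} (x y : (Fin n → F) × (Fin n → F)) : F := eInn x.1 y.1 + eInn x.2 y.2

/-- Symplectic inner product on `F^{2n}`. -/
def sInn {n : ℕ} (x y : (Fin n → F) × (Fin n → F)) : F :=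
  ∑ i, (x.1 i * y.2 i - x.2 i * y.1 i)

/-- Hermitian inner product on `F^{2n}` (with respect to `x ↦ x^q`). -/
def hInn2 (q : ℕ) {n : ℕ} (x y : (Fin n → F) × (Fin n → F)) : F :=
  (∑ i, x.1 i ^ q * y.1 i) + ∑ i, x.2 i ^ q * y.2 i

def sDualSet {n : ℕ} (C : Set ((Fin n → F) × (Fin n → F))) : Set ((Fin n → F) × (Fin n → F)) :=
  {x | ∀ y ∈ C, sInn x y = 0}

def eDualSet {n : ℕ} (C : Set ((Fin n → F) × (Fin n → F))) : Set ((Fin n → F) × (Fin n → F)) :=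
  {x | ∀ y ∈ C, eInn2 x y = 0}

def hDualSet (q : ℕ) {n : ℕ} (C : Set ((Fin n → F) × (Fin n → F))) :
    Set ((Fin n → F) × (Fin n → F)) :=
  {x | ∀ y ∈ C, hInn2 q x y = 0}

/-- `x^n f(1/x)` for `f` of degree `< n`. -/
def barPoly (n : ℕ) (f : F[X]) : F[X] := ∑ i ∈ f.support, C (f.coeff i) * X ^ (n - i)

/-- `f^⊥ = x^{deg f'} f'(1/x)` where `f f' = x^n - 1`. -/
def perpPoly (n : ℕ) (f : F[X]) : F[X] := ((X ^ n - 1) /ₘ f).reverse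

/-- coefficientwise `q`-th power. -/
def polyQ (q : ℕ) (f : F[X]) : F[X] := ∑ i ∈ f.support, C (f.coeff i ^ q) * X ^ i

/-- minimum Hamming weight of the cyclic code generated by `[u]`. -/
def cycDist (n : ℕ) (u : F[X]) : ℕ :=
  sInf {w | ∃ a : F[X], vecOf n (a * u) ≠ 0 ∧ w = hWt (vecOf n (a * u))}

/-- The general QC set generated by `([u₁],[v₁])` and `([u₂],[v₂])`. -/
def QCspan (n : ℕ) (u₁ v₁ u₂ v₂ : F[X]) : Set ((Fin n → F) × (Fin n → F)) :=
  {w | ∃ a b : F[X], w = (vecOf n (a * u₁ + b * u₂), vecOf n (a * v₁ + b * v₂))}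

/-- The lower bound `d_q(f,g,h)` for the symplectic weight (a rational number). -/
def dSymp (q n : ℕ) (f g h : F[X]) : ℚ :=
  min (min (min (cycDist n g : ℚ)
    (cycDist n ((X ^ n - 1) / GCDMonoid.gcd (X ^ n - 1) h) : ℚ))
    (cycDist n (GCDMonoid.lcm f (g / GCDMonoid.gcd g h)) : ℚ))
    ((cycDist n f + cycDist n (GCDMonoid.gcd (h * f) g) + ((q : ℚ) - 1) * cycDist n (GCDMonoid.gcd f g)) / q)

/-- The lower bound `d_q^e(f,g,h)` for the minimum distance. -/
def dEucl (n : ℕ) (f g h : F[X]) : ℕ :=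
  min (min (min (cycDist n g)
    (cycDist n ((X ^ n - 1) / GCDMonoid.gcd (X ^ n - 1) h)))
    (cycDist n (GCDMonoid.lcm f (g / GCDMonoid.gcd g h))))
    (cycDist n f + cycDist n (GCDMonoid.gcd (h * f) g))

/-!
Since `|F| = q²`, the map `x ↦ x^q` is a field involution of `F`; the Hermitian product is the
Euclidean product with the first argument twisted by it, and twisting commutes with reduction
modulo `x^n - 1`, with `bar` and with `⊥`. So it suffices to compute the Euclidean dual.

In `R = F[x]/(x^n - 1)` write `a* = a(x⁻¹)`. The Euclidean product of the coefficient vectors of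
`a` and `b` is the constant term of `a* b`, and this pairing on `R` is nondegenerate. Hence
`(c₁, c₂)` is orthogonal to `Q(f,g,h)` iff `f (c₁* + h c₂*) = 0` and `g c₂* = 0`. Since
`g g' = x^n - 1`, the annihilator of `g` is `g' R`, and `g'*` is `g^⊥` times a power of the unit
`x`; together with `bar(h) = h*` (for `deg h ≤ n`) this says `c₂ ∈ g^⊥ R` and
`c₁ + bar(h) c₂ ∈ f^⊥ R`.
-/

theorem coeff_mul_reflect_self {R : Type*} [Semiring R] (a b : R[X]) (N : ℕ) :
    (b * reflect N a).coeff N = ∑ k ∈ range (N + 1), b.coeff k * a.coeff k := by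
  rw [coeff_mul,
    Nat.sum_antidiagonal_eq_sum_range_succ (fun i j => b.coeff i * (reflect N a).coeff j)]
  refine sum_congr rfl fun k hk => ?_
  rw [coeff_reflect, revAt_le (Nat.sub_le N k),
    Nat.sub_sub_self (Nat.lt_succ_iff.mp (mem_range.mp hk))]

theorem mul_divByMonic_of_dvd {R : Type*} [CommRing R] {p g : R[X]} (hg : g.Monic) (h : g ∣ p) :
    g * (p /ₘ g) = p := by
  obtain ⟨k, rfl⟩ := h
  rw [mul_divByMonic_cancel_left k hg]

section ModXPowSubOne

variable {R : Type*} [CommRing R] {n : ℕ}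

open AdjoinRoot

theorem monic_X_pow_sub_one (hn : 0 < n) : (X ^ n - 1 : R[X]).Monic := by
  simpa using monic_X_pow_sub_C (1 : R) hn.ne'

theorem degree_X_pow_sub_one [Nontrivial R] (hn : 0 < n) : (X ^ n - 1 : R[X]).degree = n := by
  simpa using degree_X_pow_sub_C hn (1 : R)

theorem coeff_modByMonic_X_pow_sub_one [Nontrivial R] (hn : 0 < n) (u : R[X]) {k : ℕ}
    (hk : n ≤ k) : (u %ₘ (X ^ n - 1)).coeff k = 0 :=
  coeff_eq_zero_of_degree_lt <| (degree_modByMonic_lt _ (monic_X_pow_sub_one hn)).trans_le <| by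
    rw [degree_X_pow_sub_one hn]
    exact_mod_cast hk

theorem natDegree_modByMonic_X_pow_sub_one_lt [Nontrivial R] (hn : 0 < n) (u : R[X]) :
    (u %ₘ (X ^ n - 1)).natDegree < n := by
  have hM1 : (X ^ n - 1 : R[X]) ≠ 1 := fun h => by
    have := degree_X_pow_sub_one (R := R) hn
    rw [h, degree_one] at this
    exact hn.ne (by exact_mod_cast this)
  have h := natDegree_modByMonic_lt u (monic_X_pow_sub_one hn) hM1
  rwa [natDegree_eq_of_degree_eq_some (degree_X_pow_sub_one hn)] at h

theorem coeff_zero_modByMonic_X_pow_sub_one [Nontrivial R] (hn : 0 < n) {P : R[X]}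
    (hP : P.natDegree < n + n) : (P %ₘ (X ^ n - 1)).coeff 0 = P.coeff 0 + P.coeff n := by
  have hM := monic_X_pow_sub_one (R := R) hn
  have hdec := modByMonic_add_div P (X ^ n - 1)
  have hQ : (P /ₘ (X ^ n - 1)).coeff n = 0 := by
    refine coeff_eq_zero_of_natDegree_lt ?_
    rw [natDegree_divByMonic _ hM, natDegree_eq_of_degree_eq_some (degree_X_pow_sub_one hn)]
    omega
  have h0 := congr_arg (coeff · 0) hdec
  have h1 := congr_arg (coeff · n) hdec
  simp only [coeff_add, sub_mul, one_mul, coeff_sub, coeff_X_pow_mul', le_refl, if_true,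
    Nat.sub_self, coeff_modByMonic_X_pow_sub_one hn P le_rfl, if_neg hn.not_ge] at h0 h1
  linear_combination h0 + h1 + hQ

theorem mk_modByMonic (hn : 0 < n) (u : R[X]) :
    mk (X ^ n - 1) (u %ₘ (X ^ n - 1)) = mk (X ^ n - 1) u := by
  rw [← modByMonicHom_mk (monic_X_pow_sub_one hn)]
  exact mk_leftInverse (monic_X_pow_sub_one hn) _

theorem root_X_pow_sub_one_pow (n : ℕ) : root (X ^ n - 1 : R[X]) ^ n = 1 := by
  have h := eval₂_root (X ^ n - 1 : R[X])
  rwa [eval₂_sub, eval₂_X_pow, eval₂_one, sub_eq_zero] at h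

/-- `a(x) ↦ a(x⁻¹)` on `R[X]/(X^n - 1)`, where `x⁻¹ = x ^ (n - 1)`. -/
def cycConj (n : ℕ) : AdjoinRoot (X ^ n - 1 : R[X]) →ₐ[R] AdjoinRoot (X ^ n - 1 : R[X]) :=
  liftAlgHom _ (Algebra.ofId R _) (root _ ^ (n - 1)) <| by
    rw [eval₂_sub, eval₂_X_pow, eval₂_one, ← pow_mul, mul_comm, pow_mul,
      root_X_pow_sub_one_pow, one_pow, sub_self]

theorem cycConj_mk (n : ℕ) (u : R[X]) :
    cycConj n (mk (X ^ n - 1) u) = eval₂ (algebraMap R _) (cycConj n (root _)) u := by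
  simp [cycConj]

theorem root_mul_cycConj_root (hn : 0 < n) :
    root (X ^ n - 1 : R[X]) * cycConj n (root _) = 1 := by
  rw [cycConj, liftAlgHom_root, ← pow_succ', Nat.sub_add_cancel hn, root_X_pow_sub_one_pow]

theorem isUnit_root_X_pow_sub_one (hn : 0 < n) : IsUnit (root (X ^ n - 1 : R[X])) :=
  IsUnit.of_mul_eq_one _ (root_mul_cycConj_root hn)

theorem cycConj_cycConj (hn : 0 < n) (r : AdjoinRoot (X ^ n - 1 : R[X])) :
    cycConj n (cycConj n r) = r := by
  suffices (cycConj n).comp (cycConj n) = AlgHom.id R _ from congr($this r)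
  refine algHom_ext ?_
  have h := congr(cycConj n $(root_mul_cycConj_root (R := R) hn))
  rw [map_mul, map_one] at h
  calc cycConj n (cycConj n (root _))
      = root _ * cycConj n (root _) * cycConj n (cycConj n (root _)) := by
        rw [root_mul_cycConj_root hn, one_mul]
    _ = root _ := by rw [mul_assoc, h, mul_one]

theorem mk_reflect_mul_cycConj_root_pow (hn : 0 < n) {N : ℕ} {u : R[X]} (hu : u.natDegree ≤ N) :
    mk (X ^ n - 1) (reflect N u) * cycConj n (root _) ^ N = cycConj n (mk (X ^ n - 1) u) := by
  let _ : Invertible (cycConj n (root (X ^ n - 1 : R[X]))) :=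
    ⟨root _, root_mul_cycConj_root hn, by rw [mul_comm, root_mul_cycConj_root hn]⟩
  have h := eval₂_reflect_mul_pow (algebraMap R _) (cycConj n (root (X ^ n - 1 : R[X]))) N u hu
  change eval₂ _ (root _) _ * _ = _ at h
  rwa [← aeval_def, aeval_eq, ← cycConj_mk] at h

end ModXPowSubOne

section EuclideanDual

variable {K : Type*} [Field K] {n : ℕ}

open AdjoinRoot

theorem vecOf_eq_zero_iff (hn : 0 < n) {u : K[X]} : vecOf n u = 0 ↔ mk (X ^ n - 1) u = 0 := by
  rw [mk_eq_zero, ← modByMonic_eq_zero_iff_dvd (monic_X_pow_sub_one hn)]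
  refine ⟨fun h => Polynomial.ext fun k => ?_, fun h => funext fun i => by simp [vecOf, h]⟩
  by_cases hk : k < n
  · exact congrFun h ⟨k, hk⟩
  · exact coeff_modByMonic_X_pow_sub_one hn u (not_lt.mp hk)

theorem vecOf_eq_vecOf_iff (hn : 0 < n) {u v : K[X]} :
    vecOf n u = vecOf n v ↔ mk (X ^ n - 1) u = mk (X ^ n - 1) v := by
  rw [← sub_eq_zero, ← map_sub, vecOf_eq_zero_iff hn, map_sub, sub_eq_zero]

theorem vecOf_X_pow (i : Fin n) : vecOf n (X ^ (i : ℕ) : K[X]) = Pi.single i 1 := by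
  have hn : 0 < n := i.pos
  funext j
  have hX : (X ^ (i : ℕ) : K[X]) %ₘ (X ^ n - 1) = X ^ (i : ℕ) := by
    rw [modByMonic_eq_self_iff (monic_X_pow_sub_one hn), degree_X_pow, degree_X_pow_sub_one hn]
    exact_mod_cast i.isLt
  simp [vecOf, hX, coeff_X_pow, Pi.single_apply, Fin.ext_iff, eq_comm]

theorem vecOf_surjective : Function.Surjective (vecOf n : K[X] → Fin n → K) := by
  intro c
  refine ⟨∑ i : Fin n, c i • X ^ (i : ℕ), ?_⟩
  ext j
  simp [map_sum, vecOf_X_pow, Pi.single_apply]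

def constTerm (hn : 0 < n) : AdjoinRoot (X ^ n - 1 : K[X]) →ₗ[K] K :=
  (lcoeff K 0).comp (modByMonicHom (monic_X_pow_sub_one hn))

theorem constTerm_mk (hn : 0 < n) (u : K[X]) :
    constTerm hn (mk (X ^ n - 1) u) = (u %ₘ (X ^ n - 1)).coeff 0 := by
  simp [constTerm, modByMonicHom_mk]

theorem eInn_vecOf (hn : 0 < n) (u v : K[X]) :
    eInn (vecOf n u) (vecOf n v) = constTerm hn (cycConj n (mk _ u) * mk _ v) := by
  set u' := u %ₘ (X ^ n - 1)
  set v' := v %ₘ (X ^ n - 1)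
  have hu' : u'.natDegree ≤ n := (natDegree_modByMonic_X_pow_sub_one_lt hn u).le
  have hv' : v'.natDegree < n := natDegree_modByMonic_X_pow_sub_one_lt hn v
  -- `v' * reflect n u'` has degree `< 2n` and no constant term, so its reduction modulo
  -- `X^n - 1` has the coefficient of `X^n` as constant term.
  have hdeg : (v' * reflect n u').natDegree < n + n := natDegree_mul_le.trans_lt
    (Nat.add_lt_add_of_lt_of_le hv' (natDegree_reflect_le.trans (max_le le_rfl hu')))
  have hP0 : (v' * reflect n u').coeff 0 = 0 := by
    rw [mul_coeff_zero, coeff_reflect, revAt_zero, coeff_modByMonic_X_pow_sub_one hn u le_rfl,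
      mul_zero]
  have hmk : mk (X ^ n - 1) (v' * reflect n u') = cycConj n (mk _ u) * mk _ v := by
    have h := mk_reflect_mul_cycConj_root_pow hn hu'
    rw [← map_pow, root_X_pow_sub_one_pow, map_one, mul_one, mk_modByMonic hn] at h
    rw [map_mul, h, mk_modByMonic hn, mul_comm]
  calc eInn (vecOf n u) (vecOf n v) = ∑ k ∈ range (n + 1), v'.coeff k * u'.coeff k := by
        rw [sum_range_succ, coeff_modByMonic_X_pow_sub_one hn v le_rfl, zero_mul, add_zero,
          ← Fin.sum_univ_eq_sum_range (fun k => v'.coeff k * u'.coeff k)]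
        simp only [eInn, vecOf, LinearMap.coe_mk, AddHom.coe_mk]
        exact sum_congr rfl fun _ _ => mul_comm _ _
    _ = ((v' * reflect n u') %ₘ (X ^ n - 1)).coeff 0 := by
        rw [coeff_zero_modByMonic_X_pow_sub_one hn hdeg, hP0, zero_add, coeff_mul_reflect_self]
    _ = _ := by rw [← constTerm_mk, hmk]

theorem eq_zero_of_forall_constTerm_mk_mul (hn : 0 < n) {w : AdjoinRoot (X ^ n - 1 : K[X])}
    (h : ∀ a : K[X], constTerm hn (mk _ a * w) = 0) : w = 0 := by
  obtain ⟨W, rfl⟩ := mk_surjective w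
  rw [← vecOf_eq_zero_iff hn]
  funext i
  obtain ⟨a, ha⟩ := mk_surjective (cycConj n (mk (X ^ n - 1) (X ^ (i : ℕ) : K[X])))
  have hi := eInn_vecOf hn (X ^ (i : ℕ)) W
  rw [vecOf_X_pow, ← ha, h] at hi
  simpa [eInn, Pi.single_apply] using hi

theorem mk_barPoly (hn : 0 < n) {h : K[X]} (hh : h.natDegree ≤ n) :
    mk (X ^ n - 1) (barPoly n h) = cycConj n (mk _ h) := by
  rw [cycConj_mk, eval₂_eq_sum, Polynomial.sum, barPoly, map_sum]
  refine sum_congr rfl fun i hi => ?_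
  have hi : i ≤ n := (le_natDegree_of_mem_supp i hi).trans hh
  rw [map_mul, mk_C, map_pow, mk_X, AdjoinRoot.algebraMap_eq]
  congr 1
  calc root (X ^ n - 1 : K[X]) ^ (n - i)
      = root _ ^ (n - i) * (root _ * cycConj n (root _)) ^ i := by
        rw [root_mul_cycConj_root hn, one_pow, mul_one]
    _ = cycConj n (root _) ^ i := by
        rw [mul_pow, ← mul_assoc, ← pow_add, Nat.sub_add_cancel hi, root_X_pow_sub_one_pow,
          one_mul]

theorem mul_cycConj_eq_zero_iff (hn : 0 < n) {g : K[X]} (hg : g.Monic) (hgM : g ∣ X ^ n - 1)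
    {z : AdjoinRoot (X ^ n - 1 : K[X])} :
    mk _ g * cycConj n z = 0 ↔ ∃ a, z = mk _ (perpPoly n g) * a := by
  set g' := (X ^ n - 1) /ₘ g
  have hgg' : g * g' = X ^ n - 1 := mul_divByMonic_of_dvd hg hgM
  have hperp : mk (X ^ n - 1) (perpPoly n g) * cycConj n (root _) ^ g'.natDegree
      = cycConj n (mk _ g') := mk_reflect_mul_cycConj_root_pow hn le_rfl
  constructor
  · intro hz
    obtain ⟨w, hw⟩ := mk_surjective (cycConj n z)
    rw [← hw, ← map_mul, mk_eq_zero, ← hgg'] at hz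
    obtain ⟨t, rfl⟩ := (mul_dvd_mul_iff_left hg.ne_zero).mp hz
    refine ⟨cycConj n (root _) ^ g'.natDegree * cycConj n (mk _ t), ?_⟩
    rw [← cycConj_cycConj hn z, ← hw, map_mul, map_mul, ← hperp, mul_assoc]
  · rintro ⟨a, rfl⟩
    have h := congr_arg (cycConj n) hperp
    rw [map_mul, map_pow, cycConj_cycConj hn, cycConj_cycConj hn] at h
    have hg0 : mk _ g * cycConj n (mk _ (perpPoly n g)) = 0 := by
      rw [← ((isUnit_root_X_pow_sub_one hn).pow g'.natDegree).mul_left_eq_zero, mul_assoc, h,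
        ← map_mul, hgg', mk_self]
    rw [map_mul, ← mul_assoc, hg0, zero_mul]

theorem mem_eDualSet_QCcode_iff (hn : 0 < n) {f g h : K[X]} (hh : h.natDegree ≤ n)
    (c₁ c₂ : K[X]) :
    (vecOf n c₁, vecOf n c₂) ∈ eDualSet (QCcode n f g h : Set ((Fin n → K) × (Fin n → K))) ↔
      mk _ f * cycConj n (mk _ c₁ + mk _ (barPoly n h) * mk _ c₂) = 0 ∧
        mk _ g * cycConj n (mk _ c₂) = 0 := by
  have hpair : ∀ a b : K[X],
      eInn2 (vecOf n c₁, vecOf n c₂) (vecOf n (a * f), vecOf n (a * h * f + b * g)) =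
        constTerm hn (mk _ a * (mk _ f * cycConj n (mk _ c₁ + mk _ (barPoly n h) * mk _ c₂)) +
          mk _ b * (mk _ g * cycConj n (mk _ c₂))) := fun a b => by
    rw [eInn2, eInn_vecOf hn, eInn_vecOf hn, ← map_add]
    congr 1
    simp only [map_add, map_mul, mk_barPoly hn hh, cycConj_cycConj hn]
    ring
  constructor
  · intro hx
    refine ⟨eq_zero_of_forall_constTerm_mk_mul hn fun a => ?_,
      eq_zero_of_forall_constTerm_mk_mul hn fun b => ?_⟩
    · have hxa := hx _ ⟨a, 0, rfl⟩
      rwa [hpair, map_zero, zero_mul, add_zero] at hxa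
    · have hxb := hx _ ⟨0, b, rfl⟩
      rwa [hpair, map_zero, zero_mul, zero_add] at hxb
  · rintro ⟨h₁, h₂⟩ y ⟨a, b, rfl⟩
    rw [hpair, h₁, h₂, mul_zero, mul_zero, add_zero, map_zero]

theorem mem_QCspan_iff (hn : 0 < n) (c₁ c₂ u₁ v₁ u₂ v₂ : K[X]) :
    (vecOf n c₁, vecOf n c₂) ∈ QCspan n u₁ v₁ u₂ v₂ ↔
      ∃ a b : AdjoinRoot (X ^ n - 1 : K[X]),
        mk _ c₁ = a * mk _ u₁ + b * mk _ u₂ ∧ mk _ c₂ = a * mk _ v₁ + b * mk _ v₂ := by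
  simp only [QCspan, Set.mem_ofPred_eq, Prod.mk.injEq, vecOf_eq_vecOf_iff hn]
  simp only [map_add, map_mul]
  constructor
  · rintro ⟨a, b, h⟩
    exact ⟨mk _ a, mk _ b, h⟩
  · rintro ⟨a, b, h⟩
    obtain ⟨a, rfl⟩ := mk_surjective a
    obtain ⟨b, rfl⟩ := mk_surjective b
    exact ⟨a, b, h⟩

theorem eDualSet_QCcode (hn : 0 < n) {f g h : K[X]} (hf : f.Monic) (hg : g.Monic)
    (hh : h.natDegree ≤ n) (hfM : f ∣ X ^ n - 1) (hgM : g ∣ X ^ n - 1) :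
    eDualSet (QCcode n f g h : Set ((Fin n → K) × (Fin n → K))) =
      QCspan n (-(barPoly n h) * perpPoly n g) (perpPoly n g) (perpPoly n f) 0 := by
  ext ⟨x₁, x₂⟩
  obtain ⟨c₁, rfl⟩ := vecOf_surjective x₁
  obtain ⟨c₂, rfl⟩ := vecOf_surjective x₂
  rw [mem_eDualSet_QCcode_iff hn hh, mul_cycConj_eq_zero_iff hn hf hfM,
    mul_cycConj_eq_zero_iff hn hg hgM, mem_QCspan_iff hn]
  simp only [map_mul, map_neg, map_zero, mul_zero, add_zero]
  constructor
  · rintro ⟨⟨b, hb⟩, a, ha⟩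
    exact ⟨a, b, by linear_combination hb - mk _ (barPoly n h) * ha, by rw [ha, mul_comm]⟩
  · rintro ⟨a, b, h₁, h₂⟩
    exact ⟨⟨b, by rw [h₁, h₂]; ring⟩, a, by rw [h₂, mul_comm]⟩

end EuclideanDual
section HermitianDual

variable {K : Type*} [Field K] {n : ℕ}

def pairMap (φ : K →+* K) (v : (Fin n → K) × (Fin n → K)) : (Fin n → K) × (Fin n → K) :=
  (φ ∘ v.1, φ ∘ v.2)

theorem hDualSet_eq_preimage_eDualSet {q : ℕ} {φ : K →+* K} (hφ : ∀ x, φ x = x ^ q)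
    (S : Set ((Fin n → K) × (Fin n → K))) : hDualSet q S = pairMap φ ⁻¹' eDualSet S := by
  ext x
  simp [hDualSet, eDualSet, hInn2, eInn2, eInn, pairMap, hφ]

theorem vecOf_map {L : Type*} [Field L] (φ : K →+* L) (u : K[X]) :
    vecOf n (u.map φ) = φ ∘ vecOf n u := by
  funext i
  have hM : (X ^ n - 1 : K[X]).map φ = X ^ n - 1 := by simp
  simp only [vecOf, LinearMap.coe_mk, AddHom.coe_mk, Function.comp_apply, ← coeff_map,
    map_modByMonic φ (monic_X_pow_sub_one i.pos), hM]

theorem preimage_QCspan {φ : K →+* K} (hφ : Function.Involutive φ) (u₁ v₁ u₂ v₂ : K[X]) :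
    pairMap φ ⁻¹' QCspan n u₁ v₁ u₂ v₂ = QCspan n (u₁.map φ) (v₁.map φ) (u₂.map φ) (v₂.map φ) := by
  have hmap : ∀ u : K[X], (u.map φ).map φ = u := fun u => by
    rw [Polynomial.map_map, show φ.comp φ = RingHom.id K from RingHom.ext hφ, map_id]
  have hpair : ∀ a b : K[X],
      pairMap φ (vecOf n a, vecOf n b) = (vecOf n (a.map φ), vecOf n (b.map φ)) := by
    simp [pairMap, vecOf_map]
  have hinv : Function.Involutive (pairMap (n := n) φ) := fun v =>
    Prod.ext (funext fun i => hφ (v.1 i)) (funext fun i => hφ (v.2 i))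
  ext x
  constructor
  · rintro ⟨a, b, hx⟩
    refine ⟨a.map φ, b.map φ, ?_⟩
    rw [← hinv x, hx, hpair]
    simp only [Polynomial.map_add, Polynomial.map_mul]
  · rintro ⟨a, b, rfl⟩
    refine ⟨a.map φ, b.map φ, ?_⟩
    rw [hpair]
    simp only [Polynomial.map_add, Polynomial.map_mul, hmap]

theorem map_perpPoly {L : Type*} [Field L] (φ : K →+* L) {f : K[X]} (hf : f.Monic) :
    (perpPoly n f).map φ = perpPoly n (f.map φ) := by
  have hM : (X ^ n - 1 : K[X]).map φ = X ^ n - 1 := by simp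
  rw [perpPoly, perpPoly, reverse, reverse, ← reflect_map,
    ← natDegree_map_eq_of_injective φ.injective, map_divByMonic φ hf, hM]

theorem map_barPoly {L : Type*} [Field L] (φ : K →+* L) (h : K[X]) :
    (barPoly n h).map φ = barPoly n (h.map φ) := by
  simp only [barPoly, Polynomial.map_sum, Polynomial.map_mul, map_C, Polynomial.map_pow, map_X,
    support_map_of_injective _ φ.injective, coeff_map]

theorem polyQ_eq_map {q : ℕ} {φ : K →+* K} (hφ : ∀ x, φ x = x ^ q) (u : K[X]) :
    polyQ q u = u.map φ := by
  conv_rhs => rw [as_sum_support_C_mul_X_pow u]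
  simp only [polyQ, Polynomial.map_sum, Polynomial.map_mul, map_C, Polynomial.map_pow, map_X, hφ]

theorem exists_ringHom_pow_involutive [Fintype K] {q : ℕ} (hK : Fintype.card K = q ^ 2) :
    ∃ φ : K →+* K, (∀ x, φ x = x ^ q) ∧ Function.Involutive φ := by
  obtain ⟨p, hchar⟩ := CharP.exists K
  obtain ⟨m, hp, hcard⟩ := FiniteField.card K p
  have : Fact p.Prime := ⟨hp⟩
  have hq : q ∣ p ^ (m : ℕ) := hcard ▸ hK ▸ Dvd.intro_left _ (sq q).symm
  obtain ⟨k, -, rfl⟩ := (Nat.dvd_prime_pow hp).mp hq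
  refine ⟨iterateFrobenius K p k, fun x => iterateFrobenius_def p k x, fun x => ?_⟩
  rw [iterateFrobenius_def, iterateFrobenius_def, ← pow_mul, ← sq, ← hK, FiniteField.pow_card]

end HermitianDual

theorem stmt16_general [Fintype F] (q n : ℕ)
    (hF : Fintype.card F = q ^ 2) (hn : 0 < n) (f g h : F[X])
    (hf : f.Monic) (hg : g.Monic)
    (hhd : h.degree < n)
    (hfdvd : f ∣ X ^ n - 1) (hgdvd : g ∣ X ^ n - 1) :
    hDualSet q (QCcode n f g h : Set ((Fin n → F) × (Fin n → F))) =
      QCspan n (-(barPoly n (polyQ q h)) * perpPoly n (polyQ q g))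
        (perpPoly n (polyQ q g)) (perpPoly n (polyQ q f)) 0 := by
  obtain ⟨φ, hφq, hφ⟩ := exists_ringHom_pow_involutive hF
  have hhn : h.natDegree ≤ n := natDegree_le_of_degree_le hhd.le
  rw [hDualSet_eq_preimage_eDualSet hφq, eDualSet_QCcode hn hf hg hhn hfdvd hgdvd,
    preimage_QCspan hφ, polyQ_eq_map hφq, polyQ_eq_map hφq, polyQ_eq_map hφq, Polynomial.map_mul,
    Polynomial.map_neg, map_barPoly, map_perpPoly φ hg, map_perpPoly φ hf, Polynomial.map_zero]

/-- the Hermitian dual of `Q_{q^2}(f,g,h)` is the QC code generated by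
`([-bar(h^[q]) (g^[q])^⊥], [(g^[q])^⊥])` and `([(f^[q])^⊥], 0)`. -/
theorem stmt16 [Fintype F] (p r q n : ℕ) (hp : p.Prime) (hr : 0 < r) (hq : q = p ^ r)
    (hF : Fintype.card F = q ^ 2) (hn : 0 < n) (f g h : F[X])
    (hf : f.Monic) (hg : g.Monic) (hh : h.Monic)
    (hfd : f.degree < n) (hgd : g.degree < n) (hhd : h.degree < n)
    (hfdvd : f ∣ X ^ n - 1) (hgdvd : g ∣ X ^ n - 1) :
    hDualSet q (QCcode n f g h : Set ((Fin n → F) × (Fin n → F))) =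
      QCspan n (-(barPoly n (polyQ q h)) * perpPoly n (polyQ q g))
        (perpPoly n (polyQ q g)) (perpPoly n (polyQ q f)) 0 :=
  stmt16_general q n hF hn f g h hf hg hhd hfdvd hgdvd

end
end

section
/- If f(x) divides g(x), g(x) divides (g^{[q]})^perp(x), and (g^{[q]})^perp(x) divides (f^{[q]})^perp(x), then the Hermitian dual code Q_{q^2}(f,g,h)^{perp_h} is contained in Q_{q^2}(f,g,h). -/
open Polynomial Finset

noncomputable section

variable {F : Type*} [Field F] [DecidableEq F]

/-!
In `R = F[x]/(x^n - 1)` the Hermitian form is `⟨a, b⟩_h = ` constant term of `ā · b`, where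
`a ↦ ā = a^{[q]}(x⁻¹)` is a ring involution of `R`; this form is nondegenerate. Pairing `(x₁, x₂)`
with the generators `([a f], [a h f])` and `(0, [b g])` of the code gives `x̄₂ g = 0` and
`(x̄₁ + x̄₂ h) f = 0`. Conjugating, `x₂` and `x₁ + x₂ h̄` are killed by `ḡ` and `f̄`, which up to a
power of `x` are the reversals of `g^{[q]}` and `f^{[q]}`; hence they are divisible by
`(g^{[q]})^⊥` and `(f^{[q]})^⊥`. The chain `f ∣ g ∣ (g^{[q]})^⊥ ∣ (f^{[q]})^⊥` then expresses
`(x₁, x₂)` through the generators.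
-/

lemma Polynomial.reverse_map_of_injective {R S : Type*} [Semiring R] [Semiring S] {f : R →+* S}
    (hf : Function.Injective f) (p : R[X]) : (p.map f).reverse = p.reverse.map f := by
  rw [reverse, reverse, natDegree_map_eq_of_injective hf, reflect_map]

lemma exists_eq_mul_and_eq_mul_add_mul_of_dvd {R : Type*} [CommRing R] {f g g' f' h t y₁ y₂ : R}
    (hfg : f ∣ g) (hgg' : g ∣ g') (hg'f' : g' ∣ f') (h₂ : g' ∣ y₂) (h₁ : f' ∣ y₁ + y₂ * t) :
    ∃ α β, y₁ = α * f ∧ y₂ = α * h * f + β * g := by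
  obtain ⟨u, rfl⟩ := hfg
  obtain ⟨β₀, hβ₀⟩ := hgg'.trans h₂
  obtain ⟨γ, hγ⟩ := (hgg'.trans hg'f').trans h₁
  exact ⟨u * (γ - β₀ * t), β₀ - h * (γ - β₀ * t), by linear_combination hγ - t * hβ₀,
    by linear_combination hβ₀⟩

lemma polyQ_eq_map_s17 {K : Type*} [Field K] {q : ℕ} {σ : K →+* K} (hσ : ∀ c, σ c = c ^ q)
    (u : K[X]) : polyQ q u = u.map σ := by
  ext m
  simp only [polyQ, finsetSum_coeff, coeff_C_mul, coeff_X_pow, mul_ite, mul_one, mul_zero,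
    Finset.sum_ite_eq, coeff_map, ← hσ]
  split_ifs with hm
  · rfl
  · rw [notMem_support_iff.1 hm, map_zero]

lemma pow_pow_eq_self_of_card_eq_sq {K : Type*} [Field K] [Fintype K] {q : ℕ}
    (hK : Fintype.card K = q ^ 2) (c : K) : (c ^ q) ^ q = c := by
  rw [← pow_mul, ← sq, ← hK, FiniteField.pow_card]

namespace QuasiCyclic

variable {K : Type*} [Field K] {n : ℕ}

local notation "𝓡" => AdjoinRoot (X ^ n - 1 : K[X])
local notation "mk" => AdjoinRoot.mk (X ^ n - 1 : K[X])
local notation "ω" => AdjoinRoot.root (X ^ n - 1 : K[X])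

lemma monic_X_pow_sub_one (hn : 0 < n) : (X ^ n - 1 : K[X]).Monic := by
  simpa using monic_X_pow_sub_C (1 : K) hn.ne'

lemma natDegree_X_pow_sub_one : (X ^ n - 1 : K[X]).natDegree = n := by
  simpa using natDegree_X_pow_sub_C (n := n) (r := (1 : K))

lemma root_pow_self : ω ^ n = 1 := by
  have h := AdjoinRoot.mk_self (f := (X ^ n - 1 : K[X]))
  rwa [map_sub, map_pow, AdjoinRoot.mk_X, map_one, sub_eq_zero] at h

lemma reverse_X_pow_sub_one : (X ^ n - 1 : K[X]).reverse = -(X ^ n - 1) := by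
  rw [reverse, natDegree_X_pow_sub_one, reflect_sub, reflect_monomial, reflect_one,
    revAt_le le_rfl, Nat.sub_self, pow_zero, neg_sub]

lemma perpPoly_dvd_of_dvd_mul_reverse {w P : K[X]} (hw : w.Monic) (hwM : w ∣ X ^ n - 1)
    (h : X ^ n - 1 ∣ P * w.reverse) : perpPoly n w ∣ P := by
  have hcofactor : w * ((X ^ n - 1) /ₘ w) = X ^ n - 1 := by
    have h := modByMonic_add_div (X ^ n - 1) w
    rwa [(modByMonic_eq_zero_iff_dvd hw).2 hwM, zero_add] at h
  have hrev : w.reverse * perpPoly n w = -(X ^ n - 1) := by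
    rw [perpPoly, ← reverse_mul_of_domain, hcofactor, reverse_X_pow_sub_one]
  have hdvd : w.reverse * perpPoly n w ∣ w.reverse * P := by
    rw [hrev, neg_dvd, mul_comm]
    exact h
  exact (mul_dvd_mul_iff_left (reverse_eq_zero.not.2 hw.ne_zero)).1 hdvd

lemma vecOf_eq_of_mk_eq (hn : 0 < n) {a b : K[X]} (h : mk a = mk b) : vecOf n a = vecOf n b := by
  funext i
  change (AdjoinRoot.modByMonicHom (monic_X_pow_sub_one hn) (mk a)).coeff i =
    (AdjoinRoot.modByMonicHom (monic_X_pow_sub_one hn) (mk b)).coeff i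
  rw [h]

variable (n) in
def coeffZero (hn : 0 < n) : 𝓡 →ₗ[K] K :=
  (lcoeff K 0).comp (AdjoinRoot.modByMonicHom (monic_X_pow_sub_one hn))

lemma coeffZero_root_pow (hn : 0 < n) (k : ℕ) :
    coeffZero n hn (ω ^ k) = if k % n = 0 then 1 else 0 := by
  have hdeg : (X ^ (k % n) : K[X]).degree < (X ^ n - 1 : K[X]).degree := by
    rw [degree_X_pow, degree_eq_natDegree (monic_X_pow_sub_one hn).ne_zero,
      natDegree_X_pow_sub_one]
    exact_mod_cast Nat.mod_lt k hn
  rw [pow_eq_pow_mod k root_pow_self, ← AdjoinRoot.mk_X, ← map_pow, coeffZero,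
    LinearMap.comp_apply, AdjoinRoot.modByMonicHom_mk,
    (modByMonic_eq_self_iff (monic_X_pow_sub_one hn)).2 hdeg, lcoeff_apply, coeff_X_pow]
  simp only [eq_comm]

lemma add_sub_mod_eq_zero_iff {i j : ℕ} (hi : i < n) (hj : j < n) :
    (j + (n - i)) % n = 0 ↔ j = i := by
  rcases lt_trichotomy j i with h | rfl | h
  · rw [Nat.mod_eq_of_lt (by omega)]; omega
  · simp [Nat.add_sub_cancel' hi.le]
  · rw [show j + (n - i) = j - i + n by omega, Nat.add_mod_right, Nat.mod_eq_of_lt (by omega)]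
    omega

lemma coeffZero_mk_mul_root_pow (hn : 0 < n) {w : K[X]} (hw : w.natDegree < n) {i : ℕ}
    (hi : i < n) : coeffZero n hn (mk w * ω ^ (n - i)) = w.coeff i := by
  have hsum : mk w * ω ^ (n - i) = ∑ j ∈ Finset.range n, w.coeff j • ω ^ (j + (n - i)) := by
    conv_lhs => rw [as_sum_range' w n hw]
    simp only [← C_mul_X_pow_eq_monomial, map_sum, Finset.sum_mul, map_mul, AdjoinRoot.mk_C,
      map_pow, AdjoinRoot.mk_X, pow_add, Algebra.smul_def, mul_assoc, AdjoinRoot.algebraMap_eq]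
  rw [hsum, map_sum]
  simp only [map_smul, coeffZero_root_pow hn, smul_eq_mul, mul_ite, mul_one, mul_zero]
  rw [Finset.sum_congr rfl fun j hj => if_congr (add_sub_mod_eq_zero_iff hi
    (Finset.mem_range.1 hj)) rfl rfl, Finset.sum_ite_eq', if_pos (Finset.mem_range.2 hi)]

lemma natDegree_modByMonicHom_lt (hn : 0 < n) (z : 𝓡) :
    (AdjoinRoot.modByMonicHom (monic_X_pow_sub_one hn) z).natDegree < n := by
  obtain ⟨P, rfl⟩ := AdjoinRoot.mk_surjective z
  have hM1 : (X ^ n - 1 : K[X]) ≠ 1 := fun h => by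
    simpa [h, hn.ne] using natDegree_X_pow_sub_one (K := K) (n := n)
  simpa [natDegree_X_pow_sub_one] using natDegree_modByMonic_lt P (monic_X_pow_sub_one hn) hM1

lemma eq_zero_of_forall_coeffZero_mul_eq_zero (hn : 0 < n) {z : 𝓡}
    (h : ∀ r, coeffZero n hn (z * r) = 0) : z = 0 := by
  set w := AdjoinRoot.modByMonicHom (monic_X_pow_sub_one hn) z
  have hz : mk w = z := AdjoinRoot.mk_leftInverse _ z
  have hw : w = 0 := by
    ext i
    by_cases hi : i < n
    · rw [← coeffZero_mk_mul_root_pow hn (natDegree_modByMonicHom_lt hn z) hi, hz, h,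
        coeff_zero]
    · exact coeff_eq_zero_of_natDegree_lt ((natDegree_modByMonicHom_lt hn z).trans_le
        (not_lt.1 hi))
  rw [← hz, hw, map_zero]

variable (n) in
def ofVec (x : Fin n → K) : K[X] := ∑ i : Fin n, C (x i) * X ^ (i : ℕ)

lemma coeff_ofVec (x : Fin n → K) (i : Fin n) : (ofVec n x).coeff i = x i := by
  simp [ofVec, coeff_X_pow, Fin.val_inj]

lemma degree_ofVec_lt (x : Fin n → K) : (ofVec n x).degree < n := by
  refine (degree_lt_iff_coeff_zero _ _).2 fun m hm => ?_
  simp only [ofVec, finsetSum_coeff, coeff_C_mul, coeff_X_pow]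
  refine Finset.sum_eq_zero fun i _ => ?_
  rw [if_neg (by have := i.isLt; omega), mul_zero]

lemma vecOf_ofVec (hn : 0 < n) (x : Fin n → K) : vecOf n (ofVec n x) = x := by
  have hdeg : (ofVec n x).degree < (X ^ n - 1 : K[X]).degree := by
    rw [degree_eq_natDegree (monic_X_pow_sub_one hn).ne_zero, natDegree_X_pow_sub_one]
    exact degree_ofVec_lt x
  funext i
  change ((ofVec n x) %ₘ (X ^ n - 1)).coeff i = x i
  rw [(modByMonic_eq_self_iff (monic_X_pow_sub_one hn)).2 hdeg, coeff_ofVec]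

variable (n) in
def conj (σ : K →+* K) : 𝓡 →+* 𝓡 :=
  AdjoinRoot.lift ((AdjoinRoot.of _).comp σ) (ω ^ (n - 1)) (by
    rw [eval₂_sub, eval₂_X_pow, eval₂_one, ← pow_mul, mul_comm, pow_mul, root_pow_self,
      one_pow, sub_self])

variable (σ : K →+* K)

lemma conj_of (c : K) : conj n σ (AdjoinRoot.of _ c) = AdjoinRoot.of _ (σ c) :=
  AdjoinRoot.lift_of _

lemma conj_root_mul_root (hn : 0 < n) : conj n σ ω * ω = 1 := by
  rw [conj, AdjoinRoot.lift_root, ← pow_succ, Nat.sub_add_cancel hn, root_pow_self]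

lemma conj_root_pow (hn : 0 < n) {i : ℕ} (hi : i ≤ n) : conj n σ ω ^ i = ω ^ (n - i) := by
  refine left_inv_eq_right_inv (a := ω ^ i) ?_ ?_
  · rw [← mul_pow, conj_root_mul_root σ hn, one_pow]
  · rw [← pow_add, Nat.add_sub_cancel' hi, root_pow_self]

lemma conj_conj (hσ : Function.Involutive σ) (hn : 0 < n) (z : 𝓡) : conj n σ (conj n σ z) = z := by
  suffices h : (conj n σ).comp (conj n σ) = RingHom.id 𝓡 from congrArg (· z) h
  refine AdjoinRoot.ringHom_ext (RingHom.ext fun c => ?_) ?_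
  · simp [conj_of, hσ _]
  · have h := congrArg (conj n σ) (conj_root_mul_root σ hn)
    rw [map_mul, map_one] at h
    exact left_inv_eq_right_inv h (conj_root_mul_root σ hn)

lemma conj_mk_ofVec (hn : 0 < n) (x : Fin n → K) :
    conj n σ (mk (ofVec n x)) = ∑ i : Fin n, AdjoinRoot.of _ (σ (x i)) * ω ^ (n - i) := by
  simp only [ofVec, map_sum, map_mul, map_pow, AdjoinRoot.mk_C, AdjoinRoot.mk_X, conj_of]
  exact Finset.sum_congr rfl fun i _ => by rw [conj_root_pow σ hn i.isLt.le]

lemma sum_map_mul_vecOf (hn : 0 < n) (x : Fin n → K) (u : K[X]) :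
    ∑ i, σ (x i) * vecOf n u i = coeffZero n hn (conj n σ (mk (ofVec n x)) * mk u) := by
  set A := AdjoinRoot.modByMonicHom (monic_X_pow_sub_one hn) (mk u)
  have hA : mk A = mk u := AdjoinRoot.mk_leftInverse _ _
  rw [conj_mk_ofVec σ hn, ← hA, Finset.sum_mul, map_sum]
  refine Finset.sum_congr rfl fun i _ => ?_
  rw [mul_assoc, mul_comm (ω ^ _), ← AdjoinRoot.algebraMap_eq, ← Algebra.smul_def, map_smul,
    coeffZero_mk_mul_root_pow hn (natDegree_modByMonicHom_lt hn _) i.isLt, smul_eq_mul]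
  rfl

lemma conj_mk_mul_root_pow (hn : 0 < n) (v : K[X]) :
    conj n σ (mk v) * ω ^ v.natDegree = mk (v.map σ).reverse := by
  let _ : Invertible (conj n σ ω) :=
    ⟨ω, by rw [mul_comm, conj_root_mul_root σ hn], conj_root_mul_root σ hn⟩
  have h := eval₂_reverse_mul_pow ((AdjoinRoot.of _).comp σ) (conj n σ ω) v
  have hconj : conj n σ (mk v) = eval₂ ((AdjoinRoot.of _).comp σ) (conj n σ ω) v := by
    rw [conj, AdjoinRoot.lift_mk, AdjoinRoot.lift_root]
  rw [hconj, ← h, mul_assoc, ← mul_pow, conj_root_mul_root σ hn, one_pow, mul_one,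
    reverse_map_of_injective σ.injective, ← eval₂_map, ← AdjoinRoot.aeval_eq, aeval_def,
    AdjoinRoot.algebraMap_eq]
  rfl

lemma mk_perpPoly_map_dvd_of_mul_conj_eq_zero (hn : 0 < n) {v : K[X]} (hv : v.Monic)
    (hvM : v ∣ X ^ n - 1) {z : 𝓡} (hz : z * conj n σ (mk v) = 0) :
    mk (perpPoly n (v.map σ)) ∣ z := by
  obtain ⟨P, rfl⟩ := AdjoinRoot.mk_surjective z
  refine map_dvd _ (perpPoly_dvd_of_dvd_mul_reverse (hv.map σ) ?_ ?_)
  · simpa using Polynomial.map_dvd σ hvM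
  · rw [← AdjoinRoot.mk_eq_zero, map_mul, ← conj_mk_mul_root_pow σ hn, ← mul_assoc, hz,
      zero_mul]

lemma vecOf_mem_QCcode (hn : 0 < n) {f g h P₁ P₂ : K[X]} {α β : 𝓡} (h₁ : mk P₁ = α * mk f)
    (h₂ : mk P₂ = α * mk h * mk f + β * mk g) : (vecOf n P₁, vecOf n P₂) ∈ QCcode n f g h := by
  obtain ⟨a, rfl⟩ := AdjoinRoot.mk_surjective α
  obtain ⟨b, rfl⟩ := AdjoinRoot.mk_surjective β
  refine ⟨a, b, Prod.ext (vecOf_eq_of_mk_eq hn ?_) (vecOf_eq_of_mk_eq hn ?_)⟩ <;> simpa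

lemma mem_QCcode_of_forall_pairing_eq_zero (hσ : Function.Involutive σ) (hn : 0 < n)
    {f g h : K[X]} (hf : f.Monic) (hg : g.Monic) (hfM : f ∣ X ^ n - 1) (hgM : g ∣ X ^ n - 1)
    (hfg : f ∣ g) (hg_perp : g ∣ perpPoly n (g.map σ))
    (hperp : perpPoly n (g.map σ) ∣ perpPoly n (f.map σ)) {x : (Fin n → K) × (Fin n → K)}
    (hx : ∀ y ∈ QCcode n f g h, ∑ i, σ (x.1 i) * y.1 i + ∑ i, σ (x.2 i) * y.2 i = 0) :
    x ∈ QCcode n f g h := by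
  obtain ⟨x₁, x₂⟩ := x
  set z₁ := conj n σ (mk (ofVec n x₁))
  set z₂ := conj n σ (mk (ofVec n x₂))
  have hdual : ∀ a b : K[X],
      coeffZero n hn ((z₁ + z₂ * mk h) * mk f * mk a + z₂ * mk g * mk b) = 0 := fun a b => by
    have := hx _ ⟨a, b, rfl⟩
    rw [sum_map_mul_vecOf σ hn, sum_map_mul_vecOf σ hn, ← map_add] at this
    convert this using 2
    simp only [map_add, map_mul]
    ring
  have hg₀ : z₂ * mk g = 0 := eq_zero_of_forall_coeffZero_mul_eq_zero hn fun r => by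
    obtain ⟨b, rfl⟩ := AdjoinRoot.mk_surjective r
    simpa using hdual 0 b
  have hf₀ : (z₁ + z₂ * mk h) * mk f = 0 := eq_zero_of_forall_coeffZero_mul_eq_zero hn fun r => by
    obtain ⟨a, rfl⟩ := AdjoinRoot.mk_surjective r
    simpa using hdual a 0
  have hx₂ : mk (perpPoly n (g.map σ)) ∣ mk (ofVec n x₂) :=
    mk_perpPoly_map_dvd_of_mul_conj_eq_zero σ hn hg hgM <| by
      rw [← conj_conj σ hσ hn (mk (ofVec n x₂)), ← map_mul, hg₀, map_zero]
  have hx₁ : mk (perpPoly n (f.map σ)) ∣ mk (ofVec n x₁) + mk (ofVec n x₂) * conj n σ (mk h) :=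
    mk_perpPoly_map_dvd_of_mul_conj_eq_zero σ hn hf hfM <| by
      rw [← conj_conj σ hσ hn (mk (ofVec n x₁)), ← conj_conj σ hσ hn (mk (ofVec n x₂)),
        ← map_mul, ← map_add, ← map_mul, hf₀, map_zero]
  obtain ⟨α, β, h₁, h₂⟩ := exists_eq_mul_and_eq_mul_add_mul_of_dvd (map_dvd mk hfg)
    (map_dvd mk hg_perp) (map_dvd mk hperp) hx₂ hx₁
  rw [← vecOf_ofVec hn x₁, ← vecOf_ofVec hn x₂]
  exact vecOf_mem_QCcode hn h₁ h₂

end QuasiCyclic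

open QuasiCyclic

theorem stmt17_general [Fintype F] (p r q n : ℕ) (hp : p.Prime) (hq : q = p ^ r)
    (hF : Fintype.card F = q ^ 2) (hn : 0 < n) (f g h : F[X])
    (hf : f.Monic) (hg : g.Monic)
    (hfdvd : f ∣ X ^ n - 1) (hgdvd : g ∣ X ^ n - 1)
    (hd1 : f ∣ g) (hd2 : g ∣ perpPoly n (polyQ q g))
    (hd3 : perpPoly n (polyQ q g) ∣ perpPoly n (polyQ q f)) :
    hDualSet q (QCcode n f g h : Set ((Fin n → F) × (Fin n → F))) ⊆
      (QCcode n f g h : Set ((Fin n → F) × (Fin n → F))) := by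
  have := Fact.mk hp
  have : CharP F p := charP_of_card_eq_prime_pow (hF.trans (by rw [hq, ← pow_mul]))
  set σ := iterateFrobenius F p r
  have hσ : ∀ c, σ c = c ^ q := fun c => by rw [iterateFrobenius_def, hq]
  have hσσ : Function.Involutive σ := fun c => by rw [hσ, hσ, pow_pow_eq_self_of_card_eq_sq hF]
  simp only [polyQ_eq_map_s17 hσ] at hd2 hd3
  intro x hx
  refine mem_QCcode_of_forall_pairing_eq_zero σ hσσ hn hf hg hfdvd hgdvd hd1 hd2 hd3 fun y hy => ?_
  simpa only [hInn2, hσ] using hx y hy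

/-- if `f ∣ g ∣ (g^[q])^⊥ ∣ (f^[q])^⊥`, then `Q_{q^2}(f,g,h)` contains its
Hermitian dual. -/
theorem stmt17 [Fintype F] (p r q n : ℕ) (hp : p.Prime) (hr : 0 < r) (hq : q = p ^ r)
    (hF : Fintype.card F = q ^ 2) (hn : 0 < n) (f g h : F[X])
    (hf : f.Monic) (hg : g.Monic) (hh : h.Monic)
    (hfd : f.degree < n) (hgd : g.degree < n) (hhd : h.degree < n)
    (hfdvd : f ∣ X ^ n - 1) (hgdvd : g ∣ X ^ n - 1)
    (hd1 : f ∣ g) (hd2 : g ∣ perpPoly n (polyQ q g))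
    (hd3 : perpPoly n (polyQ q g) ∣ perpPoly n (polyQ q f)) :
    hDualSet q (QCcode n f g h : Set ((Fin n → F) × (Fin n → F))) ⊆
      (QCcode n f g h : Set ((Fin n → F) × (Fin n → F))) :=
  stmt17_general p r q n hp hq hF hn f g h hf hg hfdvd hgdvd hd1 hd2 hd3
end
end
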